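/- Let (u_n) be a sequence of functions ℝ → ℝ converging pointwise to u on ℝ, and s ∈ (0,1]. Then TV^s u{ℝ} ≤ liminf_{n→∞} TV^s u_n{ℝ} (lower semicontinuity of the s-total variation under pointwise convergence). -/

import Mathlib

open Set MeasureTheory Filter Topology ENNReal

/-- The `s`-total variation of `u` on a set `S ⊆ ℝ`: the supremum over all finite
subdivisions `x 0 < x 1 < ⋯ < x n` contained in `S` of `∑ |u (x (i+1)) - u (x i)| ^ (1/s)`. -/
noncomputable def TVs (s : ℝ) (u : ℝ → ℝ) (S : Set ℝ) : ℝ≥0∞ :=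
  sSup {v : ℝ≥0∞ | ∃ (n : ℕ) (x : ℕ → ℝ),
    (∀ i, i ≤ n → x i ∈ S) ∧ (∀ i, i < n → x i < x (i + 1)) ∧
    v = ∑ i ∈ Finset.range n, ENNReal.ofReal (|u (x (i + 1)) - u (x i)| ^ (1 / s))}

/-! Each subdivision sum depends continuously on finitely many values of `u`, so it passes to
pointwise limits; `TVs` is a supremum of such sums, hence lower semicontinuous. -/

theorem tendsto_sum_ofReal_rpow_abs_sub {ι : Type*} {l : Filter ι} {p : ℝ} (hp : 0 ≤ p)
    {f : ι → ℝ → ℝ} {u : ℝ → ℝ} (hf : ∀ y, Tendsto (fun k => f k y) l (𝓝 (u y)))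
    (n : ℕ) (x : ℕ → ℝ) :
    Tendsto (fun k => ∑ i ∈ Finset.range n, ENNReal.ofReal (|f k (x (i + 1)) - f k (x i)| ^ p)) l
      (𝓝 (∑ i ∈ Finset.range n, ENNReal.ofReal (|u (x (i + 1)) - u (x i)| ^ p))) :=
  tendsto_finsetSum _ fun _ _ =>
    (ENNReal.tendsto_ofReal (((hf _).sub (hf _)).abs.rpow_const (Or.inr hp)))

theorem sum_le_TVs {s : ℝ} (u : ℝ → ℝ) {S : Set ℝ} {n : ℕ} {x : ℕ → ℝ}
    (hxS : ∀ i, i ≤ n → x i ∈ S) (hx : ∀ i, i < n → x i < x (i + 1)) :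
    ∑ i ∈ Finset.range n, ENNReal.ofReal (|u (x (i + 1)) - u (x i)| ^ (1 / s)) ≤ TVs s u S :=
  le_sSup ⟨n, x, hxS, hx, rfl⟩

theorem TVs_le_liminf_of_tendsto {ι : Type*} {l : Filter ι} [l.NeBot] {s : ℝ} (hs : 0 < s)
    {f : ι → ℝ → ℝ} {u : ℝ → ℝ} (hf : ∀ y, Tendsto (fun k => f k y) l (𝓝 (u y))) (S : Set ℝ) :
    TVs s u S ≤ liminf (fun k => TVs s (f k) S) l := by
  refine sSup_le ?_
  rintro _ ⟨n, x, hxS, hx, rfl⟩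
  calc _ = liminf (fun k => ∑ i ∈ Finset.range n,
          ENNReal.ofReal (|f k (x (i + 1)) - f k (x i)| ^ (1 / s))) l :=
        ((tendsto_sum_ofReal_rpow_abs_sub (by positivity) hf n x).liminf_eq).symm
    _ ≤ _ := liminf_le_liminf (.of_forall fun k => sum_le_TVs (f k) hxS hx)

theorem TVs_lsc_of_pointwise_general (s : ℝ) (hs0 : 0 < s)
    (un : ℕ → ℝ → ℝ) (u : ℝ → ℝ)
    (hconv : ∀ x, Filter.Tendsto (fun n => un n x) Filter.atTop (nhds (u x))) :
    TVs s u Set.univ ≤ Filter.liminf (fun n => TVs s (un n) Set.univ) Filter.atTop :=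
  TVs_le_liminf_of_tendsto hs0 hconv Set.univ

theorem TVs_lsc_of_pointwise (s : ℝ) (hs0 : 0 < s) (hs1 : s ≤ 1)
    (un : ℕ → ℝ → ℝ) (u : ℝ → ℝ)
    (hconv : ∀ x, Filter.Tendsto (fun n => un n x) Filter.atTop (nhds (u x))) :
    TVs s u Set.univ ≤ Filter.liminf (fun n => TVs s (un n) Set.univ) Filter.atTop :=
  TVs_lsc_of_pointwise_general s hs0 un u hconv
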